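/- The failure product-limit estimator is the unique solution of Efron's self-consistency equation before the last observation time: if Ŝ : ℝ → ℝ satisfies Ŝ(t) = Y(t+)/n + (Ŝ(t)/n) · ∑_{u ≤ t} ΔC(u)/Ŝ(u) for every t with 0 < t < τ, then Ŝ(t) = Ŝ_PL(t) for every t with 0 < t < τ. -/

import Mathlib

open Finset
open scoped Classical

noncomputable section

namespace SurvStmt

/-- The finite set of distinct observed times `{X_1, …, X_n}`. -/
def times {n : ℕ} (X : Fin n → ℝ) : Finset ℝ := Finset.image X Finset.univ

/-- `Y(t) = #{i : X_i ≥ t}`, as a real number. -/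
def Yat {n : ℕ} (X : Fin n → ℝ) (t : ℝ) : ℝ :=
  ((Finset.univ.filter (fun i => t ≤ X i)).card : ℝ)

/-- `Y(t+) = #{i : X_i > t}`, as a real number. -/
def Yplus {n : ℕ} (X : Fin n → ℝ) (t : ℝ) : ℝ :=
  ((Finset.univ.filter (fun i => t < X i)).card : ℝ)

/-- `ΔN(t) = #{i : X_i = t, D_i = 1}`, as a real number. -/
def dN {n : ℕ} (X : Fin n → ℝ) (D : Fin n → Bool) (t : ℝ) : ℝ :=
  ((Finset.univ.filter (fun i => X i = t ∧ D i = true)).card : ℝ)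

/-- `ΔC(t) = #{i : X_i = t, D_i = 0}`, as a real number. -/
def dC {n : ℕ} (X : Fin n → ℝ) (D : Fin n → Bool) (t : ℝ) : ℝ :=
  ((Finset.univ.filter (fun i => X i = t ∧ D i = false)).card : ℝ)

/-- `Y†(t) = Y(t) − ΔN(t)`. -/
def Ydag {n : ℕ} (X : Fin n → ℝ) (D : Fin n → Bool) (t : ℝ) : ℝ :=
  Yat X t - dN X D t

/-- `τ = max_i X_i`, the largest observation time (0 if there is no data). -/
def tau {n : ℕ} (X : Fin n → ℝ) : ℝ := ((times X).max).unbotD 0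

/-- Censoring product-limit estimator `K̂(t) = ∏_{u ≤ t} (1 − ΔC(u)/Y†(u))`. -/
def Khat {n : ℕ} (X : Fin n → ℝ) (D : Fin n → Bool) (t : ℝ) : ℝ :=
  ∏ u ∈ (times X).filter (fun u => u ≤ t), (1 - dC X D u / Ydag X D u)

/-- Left limit `K̂(t−) = ∏_{u < t} (1 − ΔC(u)/Y†(u))`. -/
def Kminus {n : ℕ} (X : Fin n → ℝ) (D : Fin n → Bool) (t : ℝ) : ℝ :=
  ∏ u ∈ (times X).filter (fun u => u < t), (1 - dC X D u / Ydag X D u)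

/-- Failure product-limit estimator `Ŝ_PL(t) = ∏_{u ≤ t} (1 − ΔN(u)/Y(u))`. -/
def SPL {n : ℕ} (X : Fin n → ℝ) (D : Fin n → Bool) (t : ℝ) : ℝ :=
  ∏ u ∈ (times X).filter (fun u => u ≤ t), (1 - dN X D u / Yat X u)

/-- Left limit `Ŝ_PL(t−) = ∏_{u < t} (1 − ΔN(u)/Y(u))`. -/
def SPLminus {n : ℕ} (X : Fin n → ℝ) (D : Fin n → Bool) (t : ℝ) : ℝ :=
  ∏ u ∈ (times X).filter (fun u => u < t), (1 - dN X D u / Yat X u)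

/-- IPCW estimator `F̂_IPCW(t) = (1/n) ∑_i D_i 1{X_i ≤ t} / K̂(X_i−)`. -/
def FIPCW {n : ℕ} (X : Fin n → ℝ) (D : Fin n → Bool) (t : ℝ) : ℝ :=
  (1 / (n : ℝ)) * ∑ i : Fin n,
    (if D i = true then (1 : ℝ) else 0) * (if X i ≤ t then (1 : ℝ) else 0) / Kminus X D (X i)

/-- IPCW survival estimator `S̃_IPCW(t) = (1/n) ∑_i D_i 1{X_i > t} / K̂(X_i−)`. -/
def SIPCW {n : ℕ} (X : Fin n → ℝ) (D : Fin n → Bool) (t : ℝ) : ℝ :=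
  (1 / (n : ℝ)) * ∑ i : Fin n,
    (if D i = true then (1 : ℝ) else 0) * (if t < X i then (1 : ℝ) else 0) / Kminus X D (X i)

/-- RTTR jump weight `J(v) = 1/(n · K̂(v−))`. -/
def Jw {n : ℕ} (X : Fin n → ℝ) (D : Fin n → Bool) (v : ℝ) : ℝ :=
  1 / ((n : ℝ) * Kminus X D v)

/-- Redistribute-to-the-right estimator
`Ŝ_RTTR(t) = 1 − ∑_{v ≤ t} [J(v) ΔN(v) 1{v < τ} + J(τ) Y(τ) 1{v = τ}]`. -/
def SRTTR {n : ℕ} (X : Fin n → ℝ) (D : Fin n → Bool) (t : ℝ) : ℝ :=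
  1 - ∑ v ∈ (times X).filter (fun v => v ≤ t),
      (Jw X D v * dN X D v * (if v < tau X then (1 : ℝ) else 0)
        + Jw X D (tau X) * Yat X (tau X) * (if v = tau X then (1 : ℝ) else 0))

end SurvStmt

/-! A solution of the self-consistency equation is determined at `t` by its values at earlier
observation times: the equation at `t` reads `Ŝ(t) (n − ∑_{u < t} ΔC(u)/Ŝ(u)) = Y†(t)`, and
`Y†(t) > 0` before `τ`. So two solutions agree, by induction over the observed times, and it remains
to check that `Ŝ_PL` is a solution. With the censoring product-limit estimator `K̂`, the identities
`Y(u) (1 − ΔN(u)/Y(u)) (1 − ΔC(u)/Y†(u)) = Y(u+)` telescope to `n Ŝ_PL(t) K̂(t) = Y(t+)`, while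
expanding `1 − K̂(t)` over the jumps of `K̂` gives `∑_{u ≤ t} ΔC(u)/Ŝ_PL(u) = n (1 − K̂(t))`. -/

namespace Finset

variable {α M : Type*} [LinearOrder α]

theorem induction_below (s : Finset α) {P : α → Prop}
    (h : ∀ t, (∀ u ∈ s, u < t → P u) → P t) (t : α) : P t := by
  induction hk : #{u ∈ s | u < t} using Nat.strong_induction_on generalizing t with
  | _ k ih =>
    refine h t fun u hu hut => ih _ ?_ u rfl
    rw [← hk]
    refine card_lt_card ⟨fun v hv => ?_, fun hsub => ?_⟩
    · rw [mem_filter] at hv ⊢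
      exact ⟨hv.1, hv.2.trans hut⟩
    · simpa using hsub (mem_filter.2 ⟨hu, hut⟩)

theorem filter_lt_eq_insert_max' {s : Finset α} {t : α} (hne : {u ∈ s | u < t}.Nonempty) :
    {u ∈ s | u < t} =
      insert ({u ∈ s | u < t}.max' hne) {u ∈ s | u < {u ∈ s | u < t}.max' hne} := by
  have hmax := mem_filter.1 ({u ∈ s | u < t}.max'_mem hne)
  ext u
  simp only [mem_filter, mem_insert]
  constructor
  · rintro ⟨hu, hut⟩
    exact (le_max' _ u (mem_filter.2 ⟨hu, hut⟩)).eq_or_lt.imp id (fun h => ⟨hu, h⟩)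
  · rintro (rfl | ⟨hu, hum⟩)
    exacts [hmax, ⟨hu, hum.trans hmax.2⟩]

@[to_additive]
theorem prod_filter_le_eq_mul_prod_filter_lt [CommMonoid M] (s : Finset α) {f : α → M} {t : α}
    (hf : t ∉ s → f t = 1) :
    ∏ u ∈ s with u ≤ t, f u = f t * ∏ u ∈ s with u < t, f u := by
  by_cases ht : t ∈ s
  · rw [← prod_insert (f := f) (by simp)]
    congr 1
    ext u
    simp only [mem_filter, mem_insert, le_iff_lt_or_eq]
    constructor
    · rintro ⟨hu, h | rfl⟩
      exacts [Or.inr ⟨hu, h⟩, Or.inl rfl]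
    · rintro (rfl | ⟨hu, h⟩)
      exacts [⟨ht, Or.inr rfl⟩, ⟨hu, Or.inl h⟩]
  · rw [hf ht, one_mul]
    refine prod_congr (filter_congr fun u hu => ?_) fun _ _ => rfl
    exact ⟨fun h => h.lt_of_ne (by rintro rfl; exact ht hu), le_of_lt⟩

theorem mul_prod_filter_lt_eq [CommMonoid M] (s : Finset α) {f G : α → M} {c : M}
    (hbase : ∀ t, (∀ u ∈ s, t ≤ u) → G t = c)
    (hstep : ∀ m ∈ s, ∀ t, m < t → (∀ u ∈ s, u < t → u ≤ m) → G t = f m * G m) (t : α) :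
    c * ∏ u ∈ s with u < t, f u = G t := by
  induction t using s.induction_below with
  | h t ih =>
    by_cases hne : {u ∈ s | u < t}.Nonempty
    · set m := {u ∈ s | u < t}.max' hne
      obtain ⟨hm, hmt⟩ := mem_filter.1 ({u ∈ s | u < t}.max'_mem hne)
      rw [filter_lt_eq_insert_max' hne, prod_insert (by simp), mul_left_comm, ih m hm hmt,
        hstep m hm t hmt fun u hu hut => le_max' _ u (mem_filter.2 ⟨hu, hut⟩)]
    · rw [not_nonempty_iff_eq_empty.1 hne, prod_empty, mul_one,
        hbase t fun u hu => not_lt.1 fun hut => hne ⟨u, mem_filter.2 ⟨hu, hut⟩⟩]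

end Finset

namespace SurvStmt

variable {n : ℕ} (X : Fin n → ℝ) (D : Fin n → Bool)

theorem mem_times {u : ℝ} : u ∈ times X ↔ ∃ i, X i = u := by
  simp [times]

theorem dN_eq_zero {t : ℝ} (ht : t ∉ times X) : dN X D t = 0 := by
  simp only [dN, Nat.cast_eq_zero, card_eq_zero, filter_eq_empty_iff]
  exact fun i _ h => ht ((mem_times X).2 ⟨i, h.1⟩)

theorem dC_eq_zero {t : ℝ} (ht : t ∉ times X) : dC X D t = 0 := by
  simp only [dC, Nat.cast_eq_zero, card_eq_zero, filter_eq_empty_iff]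
  exact fun i _ h => ht ((mem_times X).2 ⟨i, h.1⟩)

theorem Yplus_nonneg (t : ℝ) : 0 ≤ Yplus X t := Nat.cast_nonneg _

theorem dN_nonneg (t : ℝ) : 0 ≤ dN X D t := Nat.cast_nonneg _

theorem dC_nonneg (t : ℝ) : 0 ≤ dC X D t := Nat.cast_nonneg _

theorem Yat_eq_Yplus_add (t : ℝ) : Yat X t = Yplus X t + dN X D t + dC X D t := by
  simp only [Yat, Yplus, dN, dC, card_filter]
  push_cast
  rw [← sum_add_distrib, ← sum_add_distrib]
  refine sum_congr rfl fun i _ => ?_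
  rcases lt_trichotomy t (X i) with h | rfl | h
  · simp [h, h.le, h.ne']
  · cases D i <;> simp
  · simp [not_le.2 h, not_lt.2 h.le, h.ne]

theorem Ydag_eq_Yplus_add (t : ℝ) : Ydag X D t = Yplus X t + dC X D t := by
  rw [Ydag, Yat_eq_Yplus_add X D]; ring

theorem Yat_mul_one_sub_dN_div (t : ℝ) : Yat X t * (1 - dN X D t / Yat X t) = Ydag X D t := by
  rcases eq_or_ne (Yat X t) 0 with h | h
  · have hY := Yat_eq_Yplus_add X D t
    have : dN X D t = 0 := by
      linarith [Yplus_nonneg X t, dN_nonneg X D t, dC_nonneg X D t]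
    rw [Ydag, h, this]; ring
  · rw [Ydag, mul_sub, mul_one, mul_div_cancel₀ _ h]

theorem Ydag_mul_one_sub_dC_div (t : ℝ) :
    Ydag X D t * (1 - dC X D t / Ydag X D t) = Yplus X t := by
  rcases eq_or_ne (Ydag X D t) 0 with h | h
  · have hY := Ydag_eq_Yplus_add X D t
    have : Yplus X t = 0 := by
      linarith [Yplus_nonneg X t, dC_nonneg X D t]
    rw [h, this]; ring
  · rw [mul_sub, mul_one, mul_div_cancel₀ _ h, Ydag_eq_Yplus_add]; ring

theorem Yat_eq_card {t : ℝ} (ht : ∀ u ∈ times X, t ≤ u) : Yat X t = n := by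
  rw [Yat, filter_true_of_mem fun i _ => ht _ ((mem_times X).2 ⟨i, rfl⟩), card_univ,
    Fintype.card_fin]

theorem Yat_eq_Yplus {m t : ℝ} (hmt : m < t) (hgap : ∀ u ∈ times X, u < t → u ≤ m) :
    Yat X t = Yplus X m := by
  simp only [Yat, Yplus]
  congr 2
  ext i
  simp only [mem_filter, mem_univ, true_and]
  exact ⟨hmt.trans_le, fun h => not_lt.1 fun hit =>
    (h.trans_le (hgap _ ((mem_times X).2 ⟨i, rfl⟩) hit)).false⟩

theorem SPL_eq_mul_SPLminus (t : ℝ) : SPL X D t = (1 - dN X D t / Yat X t) * SPLminus X D t :=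
  prod_filter_le_eq_mul_prod_filter_lt _ fun ht => by rw [dN_eq_zero X D ht, zero_div, sub_zero]

theorem Khat_eq_mul_Kminus (t : ℝ) : Khat X D t = (1 - dC X D t / Ydag X D t) * Kminus X D t :=
  prod_filter_le_eq_mul_prod_filter_lt _ fun ht => by rw [dC_eq_zero X D ht, zero_div, sub_zero]

theorem card_mul_SPLminus_mul_Kminus (t : ℝ) :
    n * SPLminus X D t * Kminus X D t = Yat X t := by
  rw [mul_assoc, SPLminus, Kminus, ← prod_mul_distrib]
  refine mul_prod_filter_lt_eq (times X) (fun t ht => Yat_eq_card X ht)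
    (fun m _ t hmt hgap => ?_) t
  rw [Yat_eq_Yplus X hmt hgap, ← Ydag_mul_one_sub_dC_div X D, ← Yat_mul_one_sub_dN_div X D]
  ring

theorem card_mul_SPL_mul_Kminus (t : ℝ) : n * SPL X D t * Kminus X D t = Ydag X D t := by
  rw [SPL_eq_mul_SPLminus, ← Yat_mul_one_sub_dN_div, ← card_mul_SPLminus_mul_Kminus X D t]
  ring

theorem card_mul_SPL_mul_Khat (t : ℝ) : n * SPL X D t * Khat X D t = Yplus X t := by
  rw [Khat_eq_mul_Kminus, ← Ydag_mul_one_sub_dC_div, ← card_mul_SPL_mul_Kminus X D t]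
  ring

theorem tau_eq_max' (hne : (times X).Nonempty) : tau X = (times X).max' hne := by
  rw [tau, ← coe_max' hne]
  rfl

theorem Yplus_pos (hn : 0 < n) {t : ℝ} (ht : t < tau X) : 0 < Yplus X t := by
  have hne : (times X).Nonempty := ⟨X ⟨0, hn⟩, (mem_times X).2 ⟨_, rfl⟩⟩
  obtain ⟨i, hi⟩ := (mem_times X).1 ((times X).max'_mem hne)
  rw [tau_eq_max' X hne, ← hi] at ht
  exact Nat.cast_pos.2 (card_pos.2 ⟨i, mem_filter.2 ⟨mem_univ i, ht⟩⟩)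

theorem Ydag_pos (hn : 0 < n) {t : ℝ} (ht : t < tau X) : 0 < Ydag X D t := by
  rw [Ydag_eq_Yplus_add]
  exact add_pos_of_pos_of_nonneg (Yplus_pos X hn ht) (dC_nonneg X D t)

theorem sum_dC_div_SPL (hn : 0 < n) {t : ℝ} (ht : t < tau X) :
    ∑ u ∈ (times X).filter (fun u => u ≤ t), dC X D u / SPL X D u = n * (1 - Khat X D t) := by
  rw [Khat, prod_one_sub_ordered, sub_sub_cancel, mul_sum]
  refine sum_congr rfl fun u hu => ?_
  obtain ⟨-, hut⟩ := mem_filter.1 hu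
  have hfilter :
      {j ∈ (times X).filter (fun u => u ≤ t) | j < u} = (times X).filter (fun j => j < u) := by
    rw [filter_filter]
    exact filter_congr fun j _ => ⟨And.right, fun hju => ⟨hju.le.trans hut, hju⟩⟩
  have hprod := card_mul_SPL_mul_Kminus X D u
  have hne : (n : ℝ) * SPL X D u * Kminus X D u ≠ 0 :=
    hprod ▸ (Ydag_pos X D hn (hut.trans_lt ht)).ne'
  simp only [mul_ne_zero_iff] at hne
  rw [hfilter, ← Kminus, ← hprod]
  field_simp [hne.1.1, hne.1.2, hne.2]

def IsSelfConsistent (S : ℝ → ℝ) (t : ℝ) : Prop :=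
  S t = Yplus X t / (n : ℝ)
    + (S t / (n : ℝ)) * ∑ u ∈ (times X).filter (fun u => u ≤ t), dC X D u / S u

theorem isSelfConsistent_SPL (hn : 0 < n) {t : ℝ} (ht : t < tau X) :
    IsSelfConsistent X D (SPL X D) t := by
  rw [IsSelfConsistent, sum_dC_div_SPL X D hn ht, ← card_mul_SPL_mul_Khat X D t]
  field_simp
  ring

theorem IsSelfConsistent.mul_card_sub_sum_eq_Ydag (hn : 0 < n) {S : ℝ → ℝ} {t : ℝ}
    (hS : IsSelfConsistent X D S t) (ht : t < tau X) :
    S t * (n - ∑ u ∈ (times X).filter (fun u => u < t), dC X D u / S u) = Ydag X D t := by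
  have hSt : S t ≠ 0 := by
    intro h0
    rw [IsSelfConsistent, h0, zero_div, zero_mul, add_zero] at hS
    exact (div_pos (Yplus_pos X hn ht) (Nat.cast_pos.2 hn)).ne hS
  rw [IsSelfConsistent, sum_filter_le_eq_add_sum_filter_lt _ fun h => by
    rw [dC_eq_zero X D h, zero_div]] at hS
  rw [Ydag_eq_Yplus_add]
  field_simp at hS
  linear_combination hS

theorem eq_of_isSelfConsistent (hn : 0 < n) (hX : ∀ i, 0 < X i) {S S' : ℝ → ℝ}
    (hS : ∀ t, 0 < t → t < tau X → IsSelfConsistent X D S t)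
    (hS' : ∀ t, 0 < t → t < tau X → IsSelfConsistent X D S' t) (t : ℝ) :
    0 < t → t < tau X → S t = S' t := by
  induction t using (times X).induction_below with
  | h t ih =>
    intro ht htau
    have hsum : ∑ u ∈ (times X).filter (fun u => u < t), dC X D u / S u
        = ∑ u ∈ (times X).filter (fun u => u < t), dC X D u / S' u := by
      refine sum_congr rfl fun u hu => ?_
      obtain ⟨hu, hut⟩ := mem_filter.1 hu
      obtain ⟨i, rfl⟩ := (mem_times X).1 hu
      rw [ih _ hu hut (hX i) (hut.trans htau)]
    have h := (hS t ht htau).mul_card_sub_sum_eq_Ydag X D hn htau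
    have h' := (hS' t ht htau).mul_card_sub_sum_eq_Ydag X D hn htau
    rw [hsum] at h
    refine mul_right_cancel₀ (fun h0 => (Ydag_pos X D hn htau).ne' ?_) (h.trans h'.symm)
    rw [← h', h0, mul_zero]

/-- the failure product-limit estimator is the unique solution of Efron's
self-consistency equation on `(0, τ)`. -/
theorem stmt8 (n : ℕ) (hn : 0 < n) (X : Fin n → ℝ) (D : Fin n → Bool)
    (hX : ∀ i, 0 < X i) (S : ℝ → ℝ)
    (hS : ∀ t : ℝ, 0 < t → t < tau X →
      S t = Yplus X t / (n : ℝ)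
        + (S t / (n : ℝ))
          * ∑ u ∈ (times X).filter (fun u => u ≤ t), dC X D u / S u) :
    ∀ t : ℝ, 0 < t → t < tau X → S t = SPL X D t :=
  eq_of_isSelfConsistent X D hn hX hS fun _ _ ht => isSelfConsistent_SPL X D hn ht

end SurvStmt
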